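/- Let n be a positive odd integer. Then σ(n) is a power of 2 if and only if n is a product of distinct Mersenne primes (equivalently, n is squarefree and every prime factor of n is a Mersenne prime). -/

import Mathlib

/-!
By multiplicativity `σ n = ∏ σ (p ^ k)` over the prime powers `p ^ k ∥ n`, and a product of
natural numbers is a power of `2` exactly when every factor is. For an odd prime `p` and `k ≥ 1`,
`σ (p ^ k) = 1 + p + ⋯ + p ^ k` has `k + 1` odd terms, so if it is a power of `2` then `k + 1` is
even and the sum factors as `(1 + p) (1 + p² + ⋯ + p ^ (k - 1))`. The second factor is again a
power of `2` of the same shape, in `p²`, so by induction on the number of terms it has at most two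
terms; two is impossible because `1 + p² ≡ 2 [MOD 4]`. Hence `k = 1` and `p + 1` is a power of `2`.
-/

open Finset ArithmeticFunction

theorem Finset.prod_eq_prime_pow_iff {ι : Type*} {s : Finset ι} {f : ι → ℕ} {p : ℕ}
    (hp : p.Prime) : (∃ m, ∏ i ∈ s, f i = p ^ m) ↔ ∀ i ∈ s, ∃ m, f i = p ^ m := by
  constructor
  · rintro ⟨m, hm⟩ i hi
    obtain ⟨k, -, hk⟩ := (Nat.dvd_prime_pow hp).mp (hm ▸ dvd_prod_of_mem f hi)
    exact ⟨k, hk⟩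
  · intro h
    choose! m hm using h
    exact ⟨∑ i ∈ s, m i, by rw [prod_congr rfl hm, prod_pow_eq_pow_sum]⟩

theorem Nat.squarefree_iff_factorization_eq_one {n : ℕ} (hn : n ≠ 0) :
    Squarefree n ↔ ∀ p ∈ n.primeFactors, n.factorization p = 1 := by
  refine ⟨fun h p hp => factorization_eq_one_of_squarefree h (prime_of_mem_primeFactors hp)
    (dvd_of_mem_primeFactors hp), fun h => squarefree_of_factorization_le_one hn fun p => ?_⟩
  by_cases hp : p ∈ n.primeFactors
  · exact (h p hp).le
  · rw [← support_factorization, Finsupp.notMem_support_iff] at hp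
    simp [hp]

theorem geom_sum_two_mul {R : Type*} [CommSemiring R] (x : R) (l : ℕ) :
    ∑ i ∈ range (2 * l), x ^ i = (1 + x) * ∑ i ∈ range l, (x ^ 2) ^ i := by
  induction l with
  | zero => simp
  | succ l ih =>
    rw [Nat.mul_succ, sum_range_succ, sum_range_succ, ih, sum_range_succ]
    ring

theorem Nat.even_geom_sum_iff {x : ℕ} (hx : Odd x) (m : ℕ) :
    Even (∑ i ∈ range m, x ^ i) ↔ Even m := by
  rw [even_sum_iff_even_card_odd, filter_true_of_mem fun i _ => hx.pow, card_range]

theorem Nat.sq_add_one_ne_two_pow {x : ℕ} (hx : Odd x) (hx1 : 1 < x) (b : ℕ) :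
    x ^ 2 + 1 ≠ 2 ^ b := by
  obtain ⟨t, rfl⟩ := hx
  match b with
  | 0 => simp
  | 1 => nlinarith
  | b + 2 =>
    have h : (2 * t + 1) ^ 2 + 1 = 4 * (t ^ 2 + t) + 2 := by ring
    rw [h, pow_add]
    omega

theorem Nat.le_two_of_geom_sum_eq_two_pow {x m a : ℕ} (hx : Odd x) (hx1 : 1 < x)
    (h : ∑ i ∈ range m, x ^ i = 2 ^ a) : m ≤ 2 := by
  induction m using Nat.strong_induction_on generalizing x a with | _ m ih
  by_contra! hm
  have h_two_le : 2 ≤ ∑ i ∈ range m, x ^ i := calc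
    2 ≤ ∑ i ∈ range 2, x ^ i := by rw [geom_sum_two]; omega
    _ ≤ ∑ i ∈ range m, x ^ i := sum_le_sum_of_subset (range_subset_range.mpr hm.le)
  have ha : a ≠ 0 := by rintro rfl; omega
  obtain ⟨l, rfl⟩ : 2 ∣ m := by
    rw [← even_iff_two_dvd, ← even_geom_sum_iff hx, h]
    exact Nat.even_pow.mpr ⟨even_two, ha⟩
  rw [geom_sum_two_mul] at h
  obtain ⟨b, -, hb⟩ := (Nat.dvd_prime_pow Nat.prime_two).mp (Dvd.intro_left _ h)
  obtain rfl : l = 2 := by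
    have := ih l (by omega) hx.pow (Nat.one_lt_pow two_ne_zero hx1) hb
    omega
  rw [geom_sum_two] at hb
  exact sq_add_one_ne_two_pow hx hx1 b hb

theorem sigma_one_prime_pow_eq_two_pow_iff {p k : ℕ} (hp : p.Prime) (hodd : Odd p) (hk : k ≠ 0) :
    (∃ a, sigma 1 (p ^ k) = 2 ^ a) ↔ k = 1 ∧ ∃ r, p = 2 ^ r - 1 := by
  rw [sigma_one_apply_prime_pow hp]
  constructor
  · rintro ⟨a, ha⟩
    obtain rfl : k = 1 := by
      have := Nat.le_two_of_geom_sum_eq_two_pow hodd hp.one_lt ha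
      omega
    rw [geom_sum_two] at ha
    exact ⟨rfl, a, by omega⟩
  · rintro ⟨rfl, r, rfl⟩
    refine ⟨r, ?_⟩
    rw [geom_sum_two]
    have := @Nat.one_le_two_pow r
    omega

theorem stmt3_general (n : ℕ) (hodd : Odd n) :
    (∃ m : ℕ, ArithmeticFunction.sigma 1 n = 2 ^ m) ↔
      (Squarefree n ∧ ∀ q ∈ n.primeFactors, ∃ r : ℕ, q = 2 ^ r - 1) := by
  have hn0 : n ≠ 0 := hodd.pos.ne'
  have h_local : ∀ p ∈ n.primeFactors, (∃ a, sigma 1 (p ^ n.factorization p) = 2 ^ a) ↔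
      n.factorization p = 1 ∧ ∃ r, p = 2 ^ r - 1 := fun p hp =>
    sigma_one_prime_pow_eq_two_pow_iff (Nat.prime_of_mem_primeFactors hp)
      (hodd.of_dvd_nat (Nat.dvd_of_mem_primeFactors hp))
      (Finsupp.mem_support_iff.mp (by rwa [Nat.support_factorization]))
  rw [isMultiplicative_sigma.multiplicative_factorization _ hn0, Finsupp.prod,
    Nat.support_factorization, prod_eq_prime_pow_iff Nat.prime_two, forall₂_congr h_local,
    Nat.squarefree_iff_factorization_eq_one hn0]
  exact forall₂_and

theorem stmt3 (n : ℕ) (hn : 0 < n) (hodd : Odd n) :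
    (∃ m : ℕ, ArithmeticFunction.sigma 1 n = 2 ^ m) ↔
      (Squarefree n ∧ ∀ q ∈ n.primeFactors, ∃ r : ℕ, q = 2 ^ r - 1) :=
  stmt3_general n hodd
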